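/- (Triangle inequality invariance, case N_b ≤ N_a ≤ N_c) Let R^k take values in [0,1] with d^k(x,y) = 1 − R^k(x,y) satisfying the triangle inequality d^k(x,z) ≤ d^k(x,y) + d^k(y,z) for all vertices. Suppose N_b ≤ N_a ≤ N_c, let 𝓜(a,b) and 𝓜(b,c) be maximum-weight matchings of cardinalities N_b each (weights in [β,1], β > 0), and let M = {(x,z) : (x,y) ∈ 𝓜(a,b), (y,z) ∈ 𝓜(b,c)} be their composition. Then d^{k+1}(a,b) + d^{k+1}(b,c) ≥ 1 − (1−β)·w(M)/N_c − β, where d^{k+1}(u,v) = 1 − (1−β)·w(𝓜(u,v))/max(N_u,N_v) − β. Consequently d^{k+1}(a,c) ≤ d^{k+1}(a,b) + d^{k+1}(b,c). -/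

import Mathlib

def IsMatching {α β : Type*} (A : Finset α) (B : Finset β) (M : Finset (α × β)) : Prop :=
  (∀ p ∈ M, p.1 ∈ A ∧ p.2 ∈ B) ∧
  (∀ p ∈ M, ∀ q ∈ M, p.1 = q.1 → p = q) ∧
  (∀ p ∈ M, ∀ q ∈ M, p.2 = q.2 → p = q)

def matchWeight {α β : Type*} (r : α → β → ℝ) (M : Finset (α × β)) : ℝ :=
  ∑ p ∈ M, r p.1 p.2

/-!
Compose the two matchings through their common side `B`: every `y ∈ B` lies on exactly one
path `x - y - z` with `(x, y) ∈ 𝓜(a,b)` and `(y, z) ∈ 𝓜(b,c)`, and these paths are in bijection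
with each matching and with the composite `M`. Summing the triangle inequality
`R(x,y) + R(y,z) - 1 ≤ R(x,z)` over the paths gives `w(𝓜(a,b)) + w(𝓜(b,c)) - N_b ≤ w(M)`.
Since `w(𝓜(a,b)) ≤ N_b ≤ N_a ≤ N_c`, this yields the first inequality after dividing by the
cardinalities, and the second follows because `M` is a matching between `N(a)` and `N(c)`,
so `w(M) ≤ w(𝓜(a,c))`.
-/

open Finset

namespace IsMatching

variable {α β γ : Type*} {A : Finset α} {B : Finset β} {C : Finset γ}

theorem image_snd_eq [DecidableEq β] {M : Finset (α × β)} (h : IsMatching A B M)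
    (hcard : M.card = B.card) :
    M.image Prod.snd = B := by
  refine eq_of_subset_of_card_le (fun y hy => ?_) ?_
  · obtain ⟨p, hp, rfl⟩ := mem_image.1 hy
    exact (h.1 p hp).2
  · rw [card_image_of_injOn fun p hp q hq => h.2.2 p hp q hq, hcard]

theorem image_fst_eq [DecidableEq α] {M : Finset (α × β)} (h : IsMatching A B M)
    (hcard : M.card = A.card) :
    M.image Prod.fst = A := by
  refine eq_of_subset_of_card_le (fun x hx => ?_) ?_
  · obtain ⟨p, hp, rfl⟩ := mem_image.1 hx
    exact (h.1 p hp).1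
  · rw [card_image_of_injOn fun p hp q hq => h.2.1 p hp q hq, hcard]

theorem comp {M₁ : Finset (α × β)} {M₂ : Finset (β × γ)} {M : Finset (α × γ)}
    (h₁ : IsMatching A B M₁) (h₂ : IsMatching B C M₂)
    (hM : ∀ p, p ∈ M ↔ ∃ y, (p.1, y) ∈ M₁ ∧ (y, p.2) ∈ M₂) : IsMatching A C M := by
  refine ⟨fun p hp => ?_, fun p hp q hq hpq => ?_, fun p hp q hq hpq => ?_⟩
  · obtain ⟨y, hxy, hyz⟩ := (hM p).1 hp
    exact ⟨(h₁.1 _ hxy).1, (h₂.1 _ hyz).2⟩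
  · obtain ⟨y, hxy, hyz⟩ := (hM p).1 hp
    obtain ⟨y', hxy', hyz'⟩ := (hM q).1 hq
    rw [← hpq] at hxy'
    obtain rfl : y = y' := congrArg Prod.snd (h₁.2.1 _ hxy _ hxy' rfl)
    exact Prod.ext hpq (Prod.mk.inj (h₂.2.1 _ hyz _ hyz' rfl)).2
  · obtain ⟨y, hxy, hyz⟩ := (hM p).1 hp
    obtain ⟨y', hxy', hyz'⟩ := (hM q).1 hq
    rw [← hpq] at hyz'
    obtain rfl : y = y' := congrArg Prod.fst (h₂.2.2 _ hyz _ hyz' rfl)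
    exact Prod.ext (Prod.mk.inj (h₁.2.2 _ hxy _ hxy' rfl)).1 hpq

end IsMatching

section Paths

variable {α β γ : Type*} [DecidableEq β] {A : Finset α} {B : Finset β} {C : Finset γ}
  {M₁ : Finset (α × β)} {M₂ : Finset (β × γ)}

def matchingPaths (M₁ : Finset (α × β)) (M₂ : Finset (β × γ)) :
    Finset ((α × β) × (β × γ)) :=
  (M₁ ×ˢ M₂).filter fun e => e.1.2 = e.2.1

theorem mem_matchingPaths {e : (α × β) × (β × γ)} :
    e ∈ matchingPaths M₁ M₂ ↔ e.1 ∈ M₁ ∧ e.2 ∈ M₂ ∧ e.1.2 = e.2.1 := by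
  simp only [matchingPaths, mem_filter, mem_product, and_assoc]

theorem sum_matchingPaths_fst (h₁ : IsMatching A B M₁) (h₂ : IsMatching B C M₂)
    (hcard : M₂.card = B.card) (f : α × β → ℝ) :
    ∑ e ∈ matchingPaths M₁ M₂, f e.1 = ∑ p ∈ M₁, f p := by
  refine sum_nbij Prod.fst (fun e he => (mem_matchingPaths.1 he).1) ?_ ?_ fun _ _ => rfl
  · intro e he e' he' hee'
    obtain ⟨-, he₂, hy⟩ := mem_matchingPaths.1 he
    obtain ⟨-, he₂', hy'⟩ := mem_matchingPaths.1 he'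
    exact Prod.ext hee' (h₂.2.1 _ he₂ _ he₂' (by rw [← hy, ← hy', hee']))
  · intro p hp
    obtain ⟨q, hq, hqp⟩ := mem_image.1 ((h₂.image_fst_eq hcard).symm ▸ (h₁.1 p hp).2)
    exact ⟨(p, q), mem_matchingPaths.2 ⟨hp, hq, hqp.symm⟩, rfl⟩

theorem sum_matchingPaths_snd (h₁ : IsMatching A B M₁) (h₂ : IsMatching B C M₂)
    (hcard : M₁.card = B.card) (f : β × γ → ℝ) :
    ∑ e ∈ matchingPaths M₁ M₂, f e.2 = ∑ q ∈ M₂, f q := by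
  refine sum_nbij Prod.snd (fun e he => (mem_matchingPaths.1 he).2.1) ?_ ?_ fun _ _ => rfl
  · intro e he e' he' hee'
    obtain ⟨he₁, -, hy⟩ := mem_matchingPaths.1 he
    obtain ⟨he₁', -, hy'⟩ := mem_matchingPaths.1 he'
    exact Prod.ext (h₁.2.2 _ he₁ _ he₁' (by rw [hy, hy', hee'])) hee'
  · intro q hq
    obtain ⟨p, hp, hpq⟩ := mem_image.1 ((h₁.image_snd_eq hcard).symm ▸ (h₂.1 q hq).1)
    exact ⟨(p, q), mem_matchingPaths.2 ⟨hp, hq, hpq⟩, rfl⟩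

theorem sum_matchingPaths_ends (h₁ : IsMatching A B M₁) {M : Finset (α × γ)}
    (hM : ∀ p, p ∈ M ↔ ∃ y, (p.1, y) ∈ M₁ ∧ (y, p.2) ∈ M₂) (f : α × γ → ℝ) :
    ∑ e ∈ matchingPaths M₁ M₂, f (e.1.1, e.2.2) = ∑ p ∈ M, f p := by
  refine sum_nbij (fun e => (e.1.1, e.2.2)) (fun e he => ?_) ?_ ?_ fun _ _ => rfl
  · obtain ⟨he₁, he₂, hy⟩ := mem_matchingPaths.1 he
    exact (hM _).2 ⟨e.1.2, he₁, hy ▸ he₂⟩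
  · intro e he e' he' hee'
    obtain ⟨he₁, -, hy⟩ := mem_matchingPaths.1 he
    obtain ⟨he₁', -, hy'⟩ := mem_matchingPaths.1 he'
    obtain ⟨hx, hz⟩ := Prod.mk.inj hee'
    have hxy : e.1 = e'.1 := h₁.2.1 _ he₁ _ he₁' hx
    exact Prod.ext hxy (Prod.ext (by rw [← hy, ← hy', hxy]) hz)
  · intro p hp
    obtain ⟨y, hxy, hyz⟩ := (hM p).1 hp
    exact ⟨((p.1, y), (y, p.2)), mem_matchingPaths.2 ⟨hxy, hyz, rfl⟩, rfl⟩

end Paths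

theorem matchWeight_le_card {α β : Type*} {r : α → β → ℝ} (hr : ∀ x y, r x y ≤ 1)
    (M : Finset (α × β)) : matchWeight r M ≤ M.card := by
  simpa [matchWeight] using sum_le_card_nsmul M (fun p => r p.1 p.2) 1 fun p _ => hr p.1 p.2

theorem matchWeight_add_matchWeight_sub_card_le_comp {α β γ : Type*}
    {A : Finset α} {B : Finset β} {C : Finset γ} {M₁ : Finset (α × β)} {M₂ : Finset (β × γ)}
    {M : Finset (α × γ)} (h₁ : IsMatching A B M₁) (h₂ : IsMatching B C M₂)
    (hcard₁ : M₁.card = B.card) (hcard₂ : M₂.card = B.card)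
    (hM : ∀ p, p ∈ M ↔ ∃ y, (p.1, y) ∈ M₁ ∧ (y, p.2) ∈ M₂)
    {r : α → β → ℝ} {s : β → γ → ℝ} {t : α → γ → ℝ}
    (htri : ∀ x y z, 1 - t x z ≤ (1 - r x y) + (1 - s y z)) :
    matchWeight r M₁ + matchWeight s M₂ - B.card ≤ matchWeight t M := by
  classical
  set P := matchingPaths M₁ M₂
  have hP : (P.card : ℝ) = B.card := by
    simpa [hcard₁] using sum_matchingPaths_fst h₁ h₂ hcard₂ fun _ => (1 : ℝ)
  calc matchWeight r M₁ + matchWeight s M₂ - B.card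
      = ∑ e ∈ P, (r e.1.1 e.1.2 + s e.2.1 e.2.2 - 1) := by
        rw [sum_sub_distrib, sum_add_distrib, sum_const, nsmul_one, hP, matchWeight,
          matchWeight, sum_matchingPaths_fst h₁ h₂ hcard₂ fun p => r p.1 p.2,
          sum_matchingPaths_snd h₁ h₂ hcard₁ fun q => s q.1 q.2]
    _ ≤ ∑ e ∈ P, t e.1.1 e.2.2 := by
        refine sum_le_sum fun e he => ?_
        rw [← (mem_matchingPaths.1 he).2.2]
        linarith [htri e.1.1 e.1.2 e.2.2]
    _ = matchWeight t M := sum_matchingPaths_ends h₁ hM fun p => t p.1 p.2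

theorem div_add_div_le_one_of_le {a b c x u : ℝ} (ha : 0 < a) (hxb : x ≤ b) (hba : b ≤ a)
    (hac : a ≤ c) (hu : u ≤ b - x) : x / a + u / c ≤ 1 := by
  have hu' : u / c ≤ (b - x) / a :=
    calc u / c ≤ (b - x) / c := by gcongr; linarith
      _ ≤ (b - x) / a := div_le_div_of_nonneg_left (by linarith) ha hac
  calc x / a + u / c ≤ x / a + (b - x) / a := by gcongr
    _ = b / a := by rw [← add_div, add_sub_cancel]
    _ ≤ 1 := div_le_one_of_le₀ hba ha.le

theorem stmt_17_general {α : Type*} (A B C : Finset α)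
    (hA : A.Nonempty)
    (hBA : B.card ≤ A.card) (hAC : A.card ≤ C.card)
    (β : ℝ) (hβ1 : β < 1)
    (Rk : α → α → ℝ)
    (hRk : ∀ x y, β ≤ Rk x y ∧ Rk x y ≤ 1)
    (htri : ∀ x y z, 1 - Rk x z ≤ (1 - Rk x y) + (1 - Rk y z))
    (Mab Mbc : Finset (α × α))
    (hMab : IsMatching A B Mab) (hMbc : IsMatching B C Mbc)
    (hMabCard : Mab.card = B.card) (hMbcCard : Mbc.card = B.card)
    (M : Finset (α × α))
    (hM : ∀ p : α × α, p ∈ M ↔ ∃ y, (p.1, y) ∈ Mab ∧ (y, p.2) ∈ Mbc)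
    (wAC : ℝ)
    (hwAC : IsGreatest {x | ∃ M', IsMatching A C M' ∧ x = matchWeight Rk M'} wAC)
    (dab dbc dac : ℝ)
    (hdab : dab = 1 - ((1 - β) * matchWeight Rk Mab / (max A.card B.card : ℕ) + β))
    (hdbc : dbc = 1 - ((1 - β) * matchWeight Rk Mbc / (max B.card C.card : ℕ) + β))
    (hdac : dac = 1 - ((1 - β) * wAC / (max A.card C.card : ℕ) + β)) :
    dab + dbc ≥ 1 - (1 - β) * matchWeight Rk M / (C.card : ℝ) - β ∧
      dac ≤ dab + dbc := by
  have hcomp := matchWeight_add_matchWeight_sub_card_le_comp hMab hMbc hMabCard hMbcCard hM htri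
  have hwab : matchWeight Rk Mab ≤ B.card :=
    hMabCard ▸ matchWeight_le_card (fun x y => (hRk x y).2) Mab
  have hwM : matchWeight Rk M ≤ wAC := hwAC.2 ⟨M, hMab.comp hMbc hM, rfl⟩
  have key : matchWeight Rk Mab / A.card + (matchWeight Rk Mbc - matchWeight Rk M) / C.card ≤ 1 :=
    div_add_div_le_one_of_le (by exact_mod_cast hA.card_pos) hwab (by exact_mod_cast hBA)
      (by exact_mod_cast hAC) (by linarith)
  rw [max_eq_left hBA] at hdab
  rw [max_eq_right (hBA.trans hAC)] at hdbc
  rw [max_eq_right hAC] at hdac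
  have hab_bc : dab + dbc ≥ 1 - (1 - β) * matchWeight Rk M / (C.card : ℝ) - β := by
    rw [hdab, hdbc]
    linear_combination mul_le_mul_of_nonneg_left key (by linarith : 0 ≤ 1 - β)
  refine ⟨hab_bc, ?_⟩
  have hwM_div : (1 - β) * matchWeight Rk M / C.card ≤ (1 - β) * wAC / C.card := by
    gcongr
  linarith

/-- Triangle inequality invariance, in the case `N_b ≤ N_a ≤ N_c`. `A`, `B`, `C` are
the neighborhoods of vertices `a`, `b`, `c` respectively. -/
theorem stmt_17 {α : Type*} (A B C : Finset α)
    (hA : A.Nonempty) (hB : B.Nonempty) (hC : C.Nonempty)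
    (hBA : B.card ≤ A.card) (hAC : A.card ≤ C.card)
    (β : ℝ) (hβ : 0 < β) (hβ1 : β < 1)
    (Rk : α → α → ℝ)
    (hRk : ∀ x y, β ≤ Rk x y ∧ Rk x y ≤ 1)
    (htri : ∀ x y z, 1 - Rk x z ≤ (1 - Rk x y) + (1 - Rk y z))
    (Mab Mbc : Finset (α × α))
    (hMab : IsMatching A B Mab) (hMbc : IsMatching B C Mbc)
    (hMabMax : ∀ M', IsMatching A B M' → matchWeight Rk M' ≤ matchWeight Rk Mab)
    (hMbcMax : ∀ M', IsMatching B C M' → matchWeight Rk M' ≤ matchWeight Rk Mbc)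
    (hMabCard : Mab.card = B.card) (hMbcCard : Mbc.card = B.card)
    (M : Finset (α × α))
    (hM : ∀ p : α × α, p ∈ M ↔ ∃ y, (p.1, y) ∈ Mab ∧ (y, p.2) ∈ Mbc)
    (wAC : ℝ)
    (hwAC : IsGreatest {x | ∃ M', IsMatching A C M' ∧ x = matchWeight Rk M'} wAC)
    (dab dbc dac : ℝ)
    (hdab : dab = 1 - ((1 - β) * matchWeight Rk Mab / (max A.card B.card : ℕ) + β))
    (hdbc : dbc = 1 - ((1 - β) * matchWeight Rk Mbc / (max B.card C.card : ℕ) + β))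
    (hdac : dac = 1 - ((1 - β) * wAC / (max A.card C.card : ℕ) + β)) :
    dab + dbc ≥ 1 - (1 - β) * matchWeight Rk M / (C.card : ℝ) - β ∧
      dac ≤ dab + dbc :=
  stmt_17_general A B C hA hBA hAC β hβ1 Rk hRk htri Mab Mbc hMab hMbc hMabCard hMbcCard M hM wAC
    hwAC dab dbc dac hdab hdbc hdac
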